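/- arXiv:1012.5305 — 4 statements merged into one kernel-verified Lean document; each statement's English description precedes it below -/
import Mathlib

section
/- For any template Γ and any 1 ≤ j ≤ l(Γ), the quantity κ_j(Γ), defined as the sum of weights of edges i→k with i < j ≤ k, satisfies κ_j(Γ) ≤ 2·δ(Γ). -/
/-- A template: a directed graph on vertices `{0, ..., l}` (`l ≥ 1`), possibly with
multiple edges, recorded as a multiset of triples `(i, j, w)` meaning an edge `i → j`
of weight `w`, such that `i < j`, `j ≤ l`, `w > 0`, every edge between consecutive
vertices has weight at least 2, and every intermediate vertex is covered by an edge. -/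
structure Template where
  l : ℕ
  edges : Multiset (ℕ × ℕ × ℕ)
  one_le_l : 1 ≤ l
  lt_of_mem : ∀ e ∈ edges, e.1 < e.2.1
  le_l : ∀ e ∈ edges, e.2.1 ≤ l
  w_pos : ∀ e ∈ edges, 0 < e.2.2
  short_two : ∀ e ∈ edges, e.2.1 = e.1 + 1 → 2 ≤ e.2.2
  covered : ∀ j, 1 ≤ j → j + 1 ≤ l → ∃ e ∈ edges, e.1 < j ∧ j < e.2.1

/-- The cogenus `δ(Γ) = ∑_{edges i→j} ((j−i)·w(e) − 1)`. -/
def Template.cogenus (Γ : Template) : ℕ :=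
  (Γ.edges.map (fun e => (e.2.1 - e.1) * e.2.2 - 1)).sum

/-- `κ_j(Γ)`: the sum of the weights of edges `i → k` with `i < j ≤ k`. -/
def Template.kappa (Γ : Template) (j : ℕ) : ℕ :=
  ((Γ.edges.filter (fun e => e.1 < j ∧ j ≤ e.2.1)).map (fun e => e.2.2)).sum

/-- The multiplicity `μ(Γ) = ∏_e w(e)²`. -/
def Template.mult (Γ : Template) : ℕ :=
  (Γ.edges.map (fun e => e.2.2 ^ 2)).prod

/-! An edge `i → k` of weight `w` contributes `w` to `κ_j` at most once, and it contributes
`(k - i) w - 1 ≥ w / 2` to `δ`, because either `w ≥ 2` or the edge has length at least `2`. -/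

theorem Multiset.sum_le_sum_of_le {α : Type*} [AddCommMonoid α] [PartialOrder α]
    [CanonicallyOrderedAdd α] {s t : Multiset α} (h : s ≤ t) : s.sum ≤ t.sum := by
  obtain ⟨u, rfl⟩ := Multiset.le_iff_exists_add.mp h
  rw [Multiset.sum_add]
  exact le_self_add

theorem le_two_mul_sub_mul_sub_one {i k w : ℕ} (hik : i < k)
    (hshort : k = i + 1 → 2 ≤ w) : w ≤ 2 * ((k - i) * w - 1) := by
  rcases Nat.lt_or_ge (i + 1) k with hlong | hle
  · have : 2 * w ≤ (k - i) * w := Nat.mul_le_mul_right w (by omega)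
    omega
  · obtain rfl : k = i + 1 := by omega
    have := hshort rfl
    rw [Nat.add_sub_cancel_left, one_mul]
    omega

namespace Template

theorem kappa_le_sum_weights (Γ : Template) (j : ℕ) :
    Γ.kappa j ≤ (Γ.edges.map fun e => e.2.2).sum :=
  Multiset.sum_le_sum_of_le (Multiset.map_le_map (Multiset.filter_le _ _))

theorem sum_weights_le_two_mul_cogenus (Γ : Template) :
    (Γ.edges.map fun e => e.2.2).sum ≤ 2 * Γ.cogenus := by
  rw [cogenus, ← Multiset.sum_map_mul_left]
  exact Multiset.sum_map_le_sum_map _ _ fun e he =>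
    le_two_mul_sub_mul_sub_one (Γ.lt_of_mem e he) (Γ.short_two e he)

end Template

theorem kappa_le_two_mul_cogenus_general (Γ : Template) (j : ℕ) :
    Γ.kappa j ≤ 2 * Γ.cogenus :=
  (Γ.kappa_le_sum_weights j).trans Γ.sum_weights_le_two_mul_cogenus

/-- For any template `Γ` and any `1 ≤ j ≤ l(Γ)`, we have `κ_j(Γ) ≤ 2·δ(Γ)`. -/
theorem kappa_le_two_mul_cogenus (Γ : Template) (j : ℕ) (hj1 : 1 ≤ j) (hj2 : j ≤ Γ.l) :
    Γ.kappa j ≤ 2 * Γ.cogenus :=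
  kappa_le_two_mul_cogenus_general Γ j
end

section
/- For any template Γ, the length satisfies l(Γ) ≤ δ(Γ) + 1, where l(Γ) is the number of vertices minus one and δ(Γ) = ∑_{edges i→j} ((j−i)w(e) − 1) is the cogenus. -/
/-!
Every inner vertex `1 ≤ j ≤ l - 1` lies strictly inside some edge `i → k`, and an edge `i → k`
of weight `w ≥ 1` has only `k - i - 1 ≤ (k - i) w - 1` vertices strictly inside it. Summing over
the edges, the cogenus is at least the number `l - 1` of inner vertices.
-/

open Finset

theorem Finset.card_le_sum_card_of_forall_exists_mem {ι α : Type*} [DecidableEq α]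
    {s : Multiset ι} {f : ι → Finset α} {t : Finset α} (h : ∀ a ∈ t, ∃ i ∈ s, a ∈ f i) :
    #t ≤ (s.map fun i => #(f i)).sum := by
  induction s using Multiset.induction_on generalizing t with
  | empty =>
    obtain rfl : t = ∅ := eq_empty_of_forall_notMem fun a ha => by simpa using h a ha
    simp
  | cons i s ih =>
    have hcover : ∀ a ∈ t \ f i, ∃ j ∈ s, a ∈ f j := by
      intro a ha
      rw [mem_sdiff] at ha
      obtain ⟨j, hj, haj⟩ := h a ha.1
      rcases Multiset.mem_cons.1 hj with rfl | hj
      · exact absurd haj ha.2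
      · exact ⟨j, hj, haj⟩
    calc #t ≤ #(t \ f i) + #(f i) := card_le_card_sdiff_add_card
      _ ≤ (s.map fun i => #(f i)).sum + #(f i) := Nat.add_le_add_right (ih hcover) _
      _ = ((i ::ₘ s).map fun i => #(f i)).sum := by
        rw [Multiset.map_cons, Multiset.sum_cons, add_comm]

namespace Template

variable (Γ : Template)

theorem l_sub_one_le_sum_card_Ioo :
    Γ.l - 1 ≤ (Γ.edges.map fun e => #(Ioo e.1 e.2.1)).sum := by
  calc Γ.l - 1 = #(Ico 1 Γ.l) := by simp
    _ ≤ _ := card_le_sum_card_of_forall_exists_mem fun j hj => by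
      rw [mem_Ico] at hj
      obtain ⟨e, he, hij, hjk⟩ := Γ.covered j hj.1 hj.2
      exact ⟨e, he, mem_Ioo.2 ⟨hij, hjk⟩⟩

theorem card_Ioo_le_of_mem {e : ℕ × ℕ × ℕ} (he : e ∈ Γ.edges) :
    #(Ioo e.1 e.2.1) ≤ (e.2.1 - e.1) * e.2.2 - 1 := by
  have hw : e.2.1 - e.1 ≤ (e.2.1 - e.1) * e.2.2 := Nat.le_mul_of_pos_right _ (Γ.w_pos e he)
  rw [Nat.card_Ioo]
  omega

theorem sum_card_Ioo_le_cogenus :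
    (Γ.edges.map fun e => #(Ioo e.1 e.2.1)).sum ≤ Γ.cogenus :=
  Multiset.sum_map_le_sum_map _ _ fun _ he => Γ.card_Ioo_le_of_mem he

end Template

/-- For any template `Γ`, the length satisfies `l(Γ) ≤ δ(Γ) + 1`. -/
theorem length_le_cogenus_add_one (Γ : Template) :
    Γ.l ≤ Γ.cogenus + 1 := by
  have := Γ.l_sub_one_le_sum_card_Ioo.trans Γ.sum_card_Ioo_le_cogenus
  omega
end

section
/- For any fixed δ ≥ 1, there are only finitely many templates Γ with cogenus δ(Γ) = δ. -/
/-! Every edge contributes at least one to the cogenus `δ`, and covering the inner vertices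
contributes at least `l - 1`. So a template of cogenus `δ` has at most `δ` edges and `l ≤ δ + 1`,
which bounds the endpoints and weights of its edges by `δ + 1` as well: only finitely many
choices remain. -/

namespace Multiset

variable {α : Type*}

theorem le_nsmul_val_of_card_le [DecidableEq α] {S : Finset α} {m : Multiset α} {n : ℕ}
    (hcard : card m ≤ n) (hS : ∀ x ∈ m, x ∈ S) : m ≤ n • S.val := by
  rw [le_iff_count]
  intro x
  by_cases hx : x ∈ m
  · rw [count_nsmul, count_eq_one_of_mem S.nodup (hS x hx), mul_one]
    exact (count_le_card x m).trans hcard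
  · simp [count_eq_zero_of_notMem hx]

theorem finite_setOf_card_le_of_forall_mem (S : Finset α) (n : ℕ) :
    {m : Multiset α | card m ≤ n ∧ ∀ x ∈ m, x ∈ S}.Finite := by
  classical
  exact (n • S.val).powerset.toFinset.finite_toSet.subset fun _ ⟨hcard, hS⟩ => by
    simpa using le_nsmul_val_of_card_le hcard hS

end Multiset

namespace Template

theorem injective_l_edges : Function.Injective fun Γ : Template => (Γ.l, Γ.edges) := by
  rintro ⟨⟩ ⟨⟩ h
  simp_all

variable (Γ : Template) {e : ℕ × ℕ × ℕ}

theorem edge_cogenus_le_cogenus (he : e ∈ Γ.edges) : (e.2.1 - e.1) * e.2.2 - 1 ≤ Γ.cogenus :=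
  Multiset.single_le_sum (fun _ _ => Nat.zero_le _) _ (Multiset.mem_map_of_mem _ he)

theorem one_le_edge_cogenus (he : e ∈ Γ.edges) : 1 ≤ (e.2.1 - e.1) * e.2.2 - 1 := by
  have hlt := Γ.lt_of_mem e he
  rcases Nat.lt_or_ge e.2.1 (e.1 + 2) with hshort | hlong
  · have hw := Γ.short_two e he (by omega)
    rw [show e.2.1 - e.1 = 1 by omega]
    omega
  · have := Nat.le_mul_of_pos_right (e.2.1 - e.1) (Γ.w_pos e he)
    omega

theorem card_edges_le_cogenus : Multiset.card Γ.edges ≤ Γ.cogenus := by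
  calc Multiset.card Γ.edges = (Γ.edges.map fun _ => 1).sum := by simp
    _ ≤ Γ.cogenus := Multiset.sum_map_le_sum_map _ _ fun _ => Γ.one_le_edge_cogenus

theorem l_le_cogenus_add_one : Γ.l ≤ Γ.cogenus + 1 := by
  classical
  let interiors := Γ.edges.bind fun e => (Finset.Ioo e.1 e.2.1).val
  have hcover : Finset.Ico 1 Γ.l ⊆ interiors.toFinset := fun j hj => by
    rw [Finset.mem_Ico] at hj
    obtain ⟨e, he, hij, hjk⟩ := Γ.covered j hj.1 (by omega)
    exact Multiset.mem_toFinset.mpr <| Multiset.mem_bind.mpr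
      ⟨e, he, Finset.mem_val.mpr (Finset.mem_Ioo.mpr ⟨hij, hjk⟩)⟩
  have hinteriors : Multiset.card interiors ≤ Γ.cogenus := by
    rw [Multiset.card_bind]
    refine Multiset.sum_map_le_sum_map _ _ fun e he => ?_
    have := Nat.le_mul_of_pos_right (e.2.1 - e.1) (Γ.w_pos e he)
    simp only [Function.comp_apply, Finset.card_val, Nat.card_Ioo]
    omega
  have hcard := (Finset.card_le_card hcover).trans (Multiset.toFinset_card_le interiors)
  rw [Nat.card_Ico] at hcard
  have := Γ.one_le_l
  omega

theorem mem_box_of_mem_edges (he : e ∈ Γ.edges) :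
    e ∈ Finset.range (Γ.cogenus + 2) ×ˢ Finset.range (Γ.cogenus + 2) ×ˢ
      Finset.range (Γ.cogenus + 2) := by
  have hlt := Γ.lt_of_mem e he
  have hle := Γ.le_l e he
  have hl := Γ.l_le_cogenus_add_one
  have hcost := Γ.edge_cogenus_le_cogenus he
  have hw := Nat.le_mul_of_pos_left e.2.2 (show 0 < e.2.1 - e.1 by omega)
  simp only [Finset.mem_product, Finset.mem_range]
  omega

end Template

theorem finitely_many_templates_general (δ : ℕ) :
    {Γ : Template | Γ.cogenus = δ}.Finite := by
  let box := Finset.range (δ + 2) ×ˢ Finset.range (δ + 2) ×ˢ Finset.range (δ + 2)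
  have hfinite := (Set.finite_Iic (δ + 1)).prod (Multiset.finite_setOf_card_le_of_forall_mem box δ)
  refine (hfinite.preimage Template.injective_l_edges.injOn).subset ?_
  rintro Γ rfl
  exact ⟨Γ.l_le_cogenus_add_one, Γ.card_edges_le_cogenus, fun _ => Γ.mem_box_of_mem_edges⟩

/-- For any fixed `δ ≥ 1`, there are only finitely many templates of cogenus `δ`. -/
theorem finitely_many_templates (δ : ℕ) (hδ : 1 ≤ δ) :
    {Γ : Template | Γ.cogenus = δ}.Finite :=
  finitely_many_templates_general δ
end

section
/- Let r = (r_1,...,r_M) be a sequence of integers whose entries, read in weakly decreasing order, take distinct values c_1 > c_2 > ... > c_n, with value c_i occurring d_i times. Define δ(r) = ∑_{(i,j): i<j, r_i < r_j} (r_j − r_i). If for some index t the values c_{t−1} and c_{t+1} are 'reversed' in r (i.e., there exist positions i < j with r_i = c_{t+1} and r_j = c_{t−1}), then δ(r) ≥ d_t · min{c_t − c_{t+1}, c_{t−1} − c_t}. -/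
/-- The cogenus `δ(r) = ∑_{i<j, r_i<r_j} (r_j − r_i)` of a sequence `r` of length `M`. -/
def deltaSeq (M : ℕ) (r : ℕ → ℤ) : ℤ :=
  ∑ p ∈ (Finset.range M ×ˢ Finset.range M).filter
      (fun p => p.1 < p.2 ∧ r p.1 < r p.2), (r p.2 - r p.1)

/-!
Let `i < j` be positions with `r i = c_{t+1}` and `r j = c_{t-1}`. Every occurrence `m` of the
middle value `c_t` forms a reversal pair with one of them: `(i, m)` if `i < m`, contributing
`c_t − c_{t+1}`, and `(m, j)` otherwise, contributing `c_{t−1} − c_t`. Distinct occurrences give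
distinct pairs, and all other terms of `δ(r)` are positive, so the `d_t` occurrences alone
contribute at least `d_t · min(c_t − c_{t+1}, c_{t−1} − c_t)`.
-/

open Finset

namespace DeltaSeq

variable {M : ℕ} {r : ℕ → ℤ}

def reversalPairs (M : ℕ) (r : ℕ → ℤ) : Finset (ℕ × ℕ) :=
  (range M ×ˢ range M).filter (fun p => p.1 < p.2 ∧ r p.1 < r p.2)

theorem mem_reversalPairs {p : ℕ × ℕ} :
    p ∈ reversalPairs M r ↔ p.1 < p.2 ∧ p.2 < M ∧ r p.1 < r p.2 := by
  simp only [reversalPairs, mem_filter, mem_product, mem_range]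
  constructor
  · rintro ⟨⟨-, h2⟩, hlt, hr⟩
    exact ⟨hlt, h2, hr⟩
  · rintro ⟨hlt, h2, hr⟩
    exact ⟨⟨hlt.trans h2, h2⟩, hlt, hr⟩

theorem sum_le_deltaSeq {S : Finset (ℕ × ℕ)} (hS : S ⊆ reversalPairs M r) :
    ∑ p ∈ S, (r p.2 - r p.1) ≤ deltaSeq M r :=
  sum_le_sum_of_subset_of_nonneg hS fun _ hp _ =>
    sub_nonneg.2 (mem_reversalPairs.1 hp).2.2.le

def pairAcross (i j m : ℕ) : ℕ × ℕ :=
  if i < m then (i, m) else (m, j)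

variable {i j : ℕ} {T : Finset ℕ}

theorem pairAcross_mem_reversalPairs {m : ℕ} (hij : i < j) (hjM : j < M) (hmM : m < M)
    (hm : r i < r m ∧ r m < r j) : pairAcross i j m ∈ reversalPairs M r := by
  rw [mem_reversalPairs, pairAcross]
  split_ifs with him
  · exact ⟨him, hmM, hm.1⟩
  · have hmi : m ≠ i := by rintro rfl; exact hm.1.ne rfl
    exact ⟨by omega, hjM, hm.2⟩

theorem injOn_pairAcross (hT : ∀ m ∈ T, r i < r m) : Set.InjOn (pairAcross i j) T := by
  intro a ha b hb hab
  simp only [pairAcross] at hab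
  split_ifs at hab with hia hib hib <;> simp only [Prod.mk.injEq] at hab
  · exact hab.2
  · exact absurd (hab.1 ▸ hT b hb) (lt_irrefl _)
  · exact absurd (hab.1 ▸ hT a ha) (lt_irrefl _)
  · exact hab.1

theorem sum_min_le_deltaSeq (hij : i < j) (hjM : j < M) (hTM : T ⊆ range M)
    (hT : ∀ m ∈ T, r i < r m ∧ r m < r j) :
    ∑ m ∈ T, min (r m - r i) (r j - r m) ≤ deltaSeq M r := by
  have hinj := injOn_pairAcross (j := j) fun m hm => (hT m hm).1
  have hsub : T.image (pairAcross i j) ⊆ reversalPairs M r := by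
    simp only [image_subset_iff]
    exact fun m hm =>
      pairAcross_mem_reversalPairs hij hjM (mem_range.1 (hTM hm)) (hT m hm)
  calc ∑ m ∈ T, min (r m - r i) (r j - r m)
      ≤ ∑ m ∈ T, (r (pairAcross i j m).2 - r (pairAcross i j m).1) := by
        refine sum_le_sum fun m _ => ?_
        unfold pairAcross
        split_ifs
        · exact min_le_left _ _
        · exact min_le_right _ _
    _ = ∑ p ∈ T.image (pairAcross i j), (r p.2 - r p.1) := (sum_image (f := fun p => r p.2 - r p.1) hinj).symm
    _ ≤ deltaSeq M r := sum_le_deltaSeq hsub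

end DeltaSeq

open DeltaSeq in
theorem deltaSeq_ge_of_reversal_general (n M : ℕ) (c : ℕ → ℤ) (d : ℕ → ℕ) (r : ℕ → ℤ)
    (hc : ∀ i j, 1 ≤ i → i < j → j ≤ n → c j < c i)
    (hcount : ∀ i, 1 ≤ i → i ≤ n →
      ((Finset.range M).filter (fun m => r m = c i)).card = d i)
    (t : ℕ) (ht1 : 2 ≤ t) (ht2 : t + 1 ≤ n)
    (hrev : ∃ i j, i < j ∧ j < M ∧ r i = c (t + 1) ∧ r j = c (t - 1)) :
    (d t : ℤ) * min (c t - c (t + 1)) (c (t - 1) - c t) ≤ deltaSeq M r := by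
  obtain ⟨i, j, hij, hjM, hri, hrj⟩ := hrev
  have hlo : c (t + 1) < c t := hc t (t + 1) (by omega) (by omega) ht2
  have hhi : c t < c (t - 1) := hc (t - 1) t (by omega) (by omega) (by omega)
  have h := sum_min_le_deltaSeq (r := r) (T := (range M).filter (fun m => r m = c t)) hij hjM
    (filter_subset _ _) fun m hm => by rw [(mem_filter.1 hm).2, hri, hrj]; exact ⟨hlo, hhi⟩
  rwa [sum_congr rfl fun m hm => by rw [(mem_filter.1 hm).2, hri, hrj], sum_const,
    hcount t (by omega) (by omega), nsmul_eq_mul] at h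

/-- Let `r` be a permutation of the multiset with distinct values `c_1 > ⋯ > c_n`
(multiplicities `d_1, …, d_n ≥ 1`).  If for some `t` the values `c_{t−1}` and `c_{t+1}`
are reversed in `r` (a `c_{t+1}` occurs before a `c_{t−1}`), then
`δ(r) ≥ d_t · min(c_t − c_{t+1}, c_{t−1} − c_t)`. -/
theorem deltaSeq_ge_of_reversal (n M : ℕ) (c : ℕ → ℤ) (d : ℕ → ℕ) (r : ℕ → ℤ)
    (hc : ∀ i j, 1 ≤ i → i < j → j ≤ n → c j < c i)
    (hd : ∀ i, 1 ≤ i → i ≤ n → 1 ≤ d i)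
    (hM : M = ∑ i ∈ Finset.Icc 1 n, d i)
    (hcount : ∀ i, 1 ≤ i → i ≤ n →
      ((Finset.range M).filter (fun m => r m = c i)).card = d i)
    (t : ℕ) (ht1 : 2 ≤ t) (ht2 : t + 1 ≤ n)
    (hrev : ∃ i j, i < j ∧ j < M ∧ r i = c (t + 1) ∧ r j = c (t - 1)) :
    (d t : ℤ) * min (c t - c (t + 1)) (c (t - 1) - c t) ≤ deltaSeq M r :=
  deltaSeq_ge_of_reversal_general n M c d r hc hcount t ht1 ht2 hrev
end
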